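/- arXiv:2009.10636 — 5 statements merged into one kernel-verified Lean document; each statement's English description precedes it below -/
import Mathlib

section
/- Let 𝐃_ET be a Sturm-Entropy-Transport distance induced by (a, F, ℓ). Suppose X = {x₁,…,xₙ} and X' = {x₁',…,xₙ'} are finite metric spaces with metrics d, d', equipped with measures μ = M∑ᵢ δ_{xᵢ} and μ' = M∑ᵢ δ_{xᵢ'}. Then 𝐃_ET^{1/a}((X,d,μ),(X',d',μ')) ≤ M·n·ℓ( sup_{i,j} |d(xᵢ,xⱼ) − d'(xᵢ',xⱼ')| ). -/
open MeasureTheory ENNReal NNReal Filter Topology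

/-- A (finite-valued) pseudo-metric on a set. -/
structure IsPseudoMetric {α : Type*} (d : α → α → ℝ) : Prop where
  nonneg : ∀ x y, 0 ≤ d x y
  refl : ∀ x, d x x = 0
  symm : ∀ x y, d x y = d y x
  triangle : ∀ x y z, d x z ≤ d x y + d y z

/-- A pseudo-metric coupling between the metrics of `X₁` and `X₂` on the disjoint union. -/
structure IsMetricCoupling {X₁ X₂ : Type*} [MetricSpace X₁] [MetricSpace X₂]
    (dh : X₁ ⊕ X₂ → X₁ ⊕ X₂ → ℝ) : Prop where
  pseudo : IsPseudoMetric dh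
  left : ∀ x y : X₁, dh (Sum.inl x) (Sum.inl y) = dist x y
  right : ∀ x y : X₂, dh (Sum.inr x) (Sum.inr y) = dist x y

/-- The `F`-divergence `D_F(γ‖μ)` with recession constant `Finf` (for superlinear `F`,
`Finf = ∞`). -/
noncomputable def Fdiv {X : Type*} [MeasurableSpace X] (F : ℝ≥0∞ → ℝ≥0∞) (Finf : ℝ≥0∞)
    (γ μ : Measure X) : ℝ≥0∞ :=
  (∫⁻ x, F (γ.rnDeriv μ x) ∂μ) + Finf * (γ.singularPart μ) Set.univ

/-- The Sturm-Entropy-Transport cost (the `1/a`-power of the Sturm-Entropy-Transport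
distance), in the equivalent formulation as an infimum over pseudo-metric couplings `d̂`
and plans `γ ∈ 𝓜(X₁×X₂)` of `∑ᵢ D_F(γᵢ‖μᵢ) + ∫ ℓ(d̂(x,y)) dγ`. -/
noncomputable def SturmETCost {X₁ X₂ : Type*} [MetricSpace X₁] [MetricSpace X₂]
    [MeasurableSpace X₁] [MeasurableSpace X₂]
    (F : ℝ≥0∞ → ℝ≥0∞) (Finf : ℝ≥0∞) (ℓ : ℝ → ℝ≥0∞)
    (μ₁ : Measure X₁) (μ₂ : Measure X₂) : ℝ≥0∞ :=
  ⨅ (dh : X₁ ⊕ X₂ → X₁ ⊕ X₂ → ℝ) (_ : IsMetricCoupling dh)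
    (γ : Measure (X₁ × X₂)) (_ : IsFiniteMeasure γ),
      Fdiv F Finf (γ.map Prod.fst) μ₁ + Fdiv F Finf (γ.map Prod.snd) μ₂ +
        ∫⁻ q, ℓ (dh (Sum.inl q.1) (Sum.inr q.2)) ∂γ

/-!
Glue `X` and `X'` along `i ↦ (xᵢ, xᵢ')` with the pseudo-metric `Metric.glueDist` at parameter
`δ`: since the distortion `|d(xᵢ,xⱼ) - d'(xᵢ',xⱼ')|` is at most `δ ≤ 2δ`, this is a coupling of
`d` and `d'` in which `d̂(xᵢ, xᵢ') = δ`. The plan `M ∑ᵢ δ_{(xᵢ,xᵢ')}` has marginals exactly `μ`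
and `μ'`, so both entropy terms vanish because `F 1 = 0`, and its transport cost is `M·n·ℓ(δ)`.
-/

lemma isPseudoMetric_dist {α : Type*} [PseudoMetricSpace α] :
    IsPseudoMetric (dist : α → α → ℝ) :=
  ⟨fun _ _ => dist_nonneg, dist_self, dist_comm, dist_triangle⟩

section Coupling

open Metric

variable {X₁ X₂ : Type*} [MetricSpace X₁] [MetricSpace X₂]

lemma isMetricCoupling_sumDist : IsMetricCoupling (Metric.Sum.dist : X₁ ⊕ X₂ → X₁ ⊕ X₂ → ℝ) :=
  letI := metricSpaceSum (X := X₁) (Y := X₂)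
  ⟨isPseudoMetric_dist, fun _ _ => rfl, fun _ _ => rfl⟩

variable {ι : Type*} {Φ : ι → X₁} {Ψ : ι → X₂} {ε : ℝ}

/-- For `0 < ε` this is the triangle inequality of `glueMetricApprox`; the case `ε = 0`
follows since `glueDist` is `1`-Lipschitz in `ε`. -/
lemma glueDist_triangle_of_distortion_le [Nonempty ι] (hε : 0 ≤ ε)
    (H : ∀ p q, |dist (Φ p) (Φ q) - dist (Ψ p) (Ψ q)| ≤ 2 * ε) (u v w : X₁ ⊕ X₂) :
    glueDist Φ Ψ ε u w ≤ glueDist Φ Ψ ε u v + glueDist Φ Ψ ε v w := by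
  refine le_of_forall_pos_le_add fun η hη => ?_
  have htriangle : glueDist Φ Ψ (ε + η / 2) u w ≤
      glueDist Φ Ψ (ε + η / 2) u v + glueDist Φ Ψ (ε + η / 2) v w :=
    @dist_triangle _ (glueMetricApprox Φ Ψ (ε + η / 2) (by positivity)
      fun p q => (H p q).trans (by linarith)).toPseudoMetricSpace u v w
  have hmono : ∀ u v, glueDist Φ Ψ ε u v ≤ glueDist Φ Ψ (ε + η / 2) u v := by
    rintro (a | a) (b | b) <;> simp only [glueDist] <;> linarith
  have hperturb : ∀ u v, glueDist Φ Ψ (ε + η / 2) u v ≤ glueDist Φ Ψ ε u v + η / 2 := by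
    rintro (a | a) (b | b) <;> simp only [glueDist] <;> linarith
  linarith [hmono u w, hperturb u v, hperturb v w]

lemma isMetricCoupling_glueDist [Nonempty ι]
    (H : ∀ p q, |dist (Φ p) (Φ q) - dist (Ψ p) (Ψ q)| ≤ 2 * ε) :
    IsMetricCoupling (glueDist Φ Ψ ε) := by
  have hε : 0 ≤ ε := by
    obtain ⟨p⟩ := ‹Nonempty ι›
    simpa using H p p
  refine ⟨⟨?_, ?_, ?_, glueDist_triangle_of_distortion_le hε H⟩, fun _ _ => rfl, fun _ _ => rfl⟩
  · rintro (a | a) (b | b)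
    exacts [dist_nonneg, hε.trans (le_glueDist_inl_inr Φ Ψ ε a b),
      hε.trans (le_glueDist_inr_inl Φ Ψ ε a b), dist_nonneg]
  · rintro (a | a) <;> exact dist_self a
  · rintro (a | a) (b | b) <;> first | rfl | exact dist_comm a b

lemma exists_isMetricCoupling_of_distortion_le (Φ : ι → X₁) (Ψ : ι → X₂)
    (H : ∀ p q, |dist (Φ p) (Φ q) - dist (Ψ p) (Ψ q)| ≤ 2 * ε) :
    ∃ dh, IsMetricCoupling dh ∧ ∀ p, dh (.inl (Φ p)) (.inr (Ψ p)) = ε := by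
  cases isEmpty_or_nonempty ι
  · exact ⟨Metric.Sum.dist, isMetricCoupling_sumDist, isEmptyElim⟩
  · exact ⟨glueDist Φ Ψ ε, isMetricCoupling_glueDist H, glueDist_glued_points Φ Ψ ε⟩

end Coupling

lemma Fdiv_self {Y : Type*} [MeasurableSpace Y] {F : ℝ≥0∞ → ℝ≥0∞} (hF1 : F 1 = 0)
    (Finf : ℝ≥0∞) (μ : Measure Y) [SigmaFinite μ] : Fdiv F Finf μ μ = 0 := by
  have hF : ∀ᵐ y ∂μ, F (μ.rnDeriv μ y) = 0 := by
    filter_upwards [Measure.rnDeriv_self μ] with y hy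
    rw [hy, hF1]
  simp [Fdiv, Measure.singularPart_self, lintegral_congr_ae hF]

section Cost

variable {X₁ X₂ : Type*} [MetricSpace X₁] [MetricSpace X₂]
  [MeasurableSpace X₁] [MeasurableSpace X₂]

lemma sturmETCost_map_le {F : ℝ≥0∞ → ℝ≥0∞} (hF1 : F 1 = 0) (Finf : ℝ≥0∞) (ℓ : ℝ → ℝ≥0∞)
    {dh : X₁ ⊕ X₂ → X₁ ⊕ X₂ → ℝ} (hdh : IsMetricCoupling dh)
    (γ : Measure (X₁ × X₂)) [IsFiniteMeasure γ] :
    SturmETCost F Finf ℓ (γ.map Prod.fst) (γ.map Prod.snd) ≤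
      ∫⁻ q, ℓ (dh (.inl q.1) (.inr q.2)) ∂γ := by
  refine iInf₂_le_of_le dh hdh (iInf₂_le_of_le γ ‹_› ?_)
  rw [Fdiv_self hF1, Fdiv_self hF1, zero_add, zero_add]

variable {ι : Type*} [Fintype ι]

lemma map_smul_sum_dirac {Y Z : Type*} [MeasurableSpace Y] [MeasurableSpace Z] {f : Y → Z}
    (hf : Measurable f) (c : ℝ≥0∞) (y : ι → Y) :
    ((c • ∑ i, Measure.dirac (y i)).map f) = c • ∑ i, Measure.dirac (f (y i)) := by
  simp [Measure.map_smul, Measure.map_finset_sum' hf.aemeasurable, Measure.map_dirac' hf]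

lemma sturmETCost_smul_sum_dirac_le [MeasurableSingletonClass X₁] [MeasurableSingletonClass X₂]
    {F : ℝ≥0∞ → ℝ≥0∞} (hF1 : F 1 = 0) (Finf : ℝ≥0∞) (ℓ : ℝ → ℝ≥0∞)
    {dh : X₁ ⊕ X₂ → X₁ ⊕ X₂ → ℝ} (hdh : IsMetricCoupling dh)
    (M : ℝ≥0) (x₁ : ι → X₁) (x₂ : ι → X₂) :
    SturmETCost F Finf ℓ ((M : ℝ≥0∞) • ∑ i, Measure.dirac (x₁ i))
        ((M : ℝ≥0∞) • ∑ i, Measure.dirac (x₂ i)) ≤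
      M * ∑ i, ℓ (dh (.inl (x₁ i)) (.inr (x₂ i))) := by
  let γ : Measure (X₁ × X₂) := (M : ℝ≥0∞) • ∑ i, Measure.dirac (x₁ i, x₂ i)
  have : IsFiniteMeasure γ := by
    rw [show γ = M • ∑ i, Measure.dirac (x₁ i, x₂ i) from Measure.coe_nnreal_smul _ _]
    infer_instance
  have h := sturmETCost_map_le hF1 Finf ℓ hdh γ
  rw [map_smul_sum_dirac measurable_fst, map_smul_sum_dirac measurable_snd,
    lintegral_smul_measure, lintegral_finsetSum_measure] at h
  simpa [lintegral_dirac] using h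

end Cost

theorem sturmET_dirac_bound_general
    {X X' : Type*} [MetricSpace X] [MetricSpace X']
    [MeasurableSpace X] [BorelSpace X] [MeasurableSpace X'] [BorelSpace X']
    (F : ℝ≥0∞ → ℝ≥0∞)
    (hF1 : F 1 = 0)
    (ℓ : ℝ → ℝ≥0∞)
    (n : ℕ) (x : Fin n → X) (x' : Fin n → X') (M : ℝ≥0) :
    SturmETCost F ⊤ ℓ
        ((M : ℝ≥0∞) • ∑ i : Fin n, Measure.dirac (x i))
        ((M : ℝ≥0∞) • ∑ i : Fin n, Measure.dirac (x' i)) ≤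
      (M : ℝ≥0∞) * n * ℓ (⨆ i : Fin n, ⨆ j : Fin n,
        |dist (x i) (x j) - dist (x' i) (x' j)|) := by
  set δ := ⨆ i : Fin n, ⨆ j : Fin n, |dist (x i) (x j) - dist (x' i) (x' j)|
  have hδ0 : 0 ≤ δ := Real.iSup_nonneg fun i => Real.iSup_nonneg fun j => abs_nonneg _
  have hδ : ∀ i j, |dist (x i) (x j) - dist (x' i) (x' j)| ≤ 2 * δ := fun i j =>
    calc _ ≤ δ := (le_ciSup (Finite.bddAbove_range _) j).trans
          (le_ciSup (Finite.bddAbove_range (fun i => ⨆ j : Fin n, _)) i)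
      _ ≤ 2 * δ := by linarith
  obtain ⟨dh, hdh, hglued⟩ := exists_isMetricCoupling_of_distortion_le x x' hδ
  calc _ ≤ (M : ℝ≥0∞) * ∑ i, ℓ (dh (.inl (x i)) (.inr (x' i))) :=
        sturmETCost_smul_sum_dirac_le hF1 ⊤ ℓ hdh M x x'
    _ = (M : ℝ≥0∞) * n * ℓ δ := by simp [hglued, mul_assoc]

/-- For finite metric spaces `X = {x₁,…,xₙ}`, `X' = {x₁',…,xₙ'}` with
measures `μ = M ∑ᵢ δ_{xᵢ}`, `μ' = M ∑ᵢ δ_{xᵢ'}`, the Sturm-Entropy-Transport cost satisfies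
`𝐃_ET^{1/a}((X,d,μ),(X',d',μ')) ≤ M·n·ℓ(sup_{i,j} |d(xᵢ,xⱼ) − d'(xᵢ',xⱼ')|)`. -/
theorem sturmET_dirac_bound
    {X X' : Type*} [MetricSpace X] [MetricSpace X']
    [MeasurableSpace X] [BorelSpace X] [MeasurableSpace X'] [BorelSpace X']
    (F : ℝ≥0∞ → ℝ≥0∞)
    (hFconv : ∀ x y t : ℝ≥0∞, t ≤ 1 → F (t * x + (1 - t) * y) ≤ t * F x + (1 - t) * F y)
    (hFlsc : LowerSemicontinuous F)
    (hF1 : F 1 = 0)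
    (ℓ : ℝ → ℝ≥0∞)
    (hℓcont : Continuous ℓ)
    (hℓmono : Monotone ℓ)
    (hℓ0 : ∀ s : ℝ, 0 ≤ s → (ℓ s = 0 ↔ s = 0))
    (n : ℕ) (x : Fin n → X) (x' : Fin n → X') (M : ℝ≥0) :
    SturmETCost F ⊤ ℓ
        ((M : ℝ≥0∞) • ∑ i : Fin n, Measure.dirac (x i))
        ((M : ℝ≥0∞) • ∑ i : Fin n, Measure.dirac (x' i)) ≤
      (M : ℝ≥0∞) * n * ℓ (⨆ i : Fin n, ⨆ j : Fin n,
        |dist (x i) (x j) - dist (x' i) (x' j)|) :=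
  sturmET_dirac_bound_general F hF1 ℓ n x x' M
end

section
/- Let X₁, X₂ be complete separable metric spaces, γₙ ∈ 𝓜(X₁×X₂) a sequence converging weakly to γ, and d̂ₙ : X₁×X₂ → [0,∞) a sequence of functions, each 1-Lipschitz with respect to the metric d₁ + d₂ on X₁×X₂, converging pointwise to d̂ and uniformly on compact sets, with {γₙ} equally tight and uniformly bounded in mass. Let ℓ : [0,∞) → [0,∞] be lower semicontinuous and increasing. Then liminf_n ∫_{X₁×X₂} ℓ(d̂ₙ(x,y)) dγₙ ≥ ∫_{X₁×X₂} ℓ(d̂(x,y)) dγ. -/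
open MeasureTheory ENNReal Filter Topology

/-!
Since the total masses converge, weak convergence of finite measures gives
`γ G ≤ liminf γₙ G` for open `G`, and by the layer-cake formula `∫ g dγ ≤ liminf ∫ g dγₙ` for
every finite lower semicontinuous `g`. Assume first `ℓ ≤ C`. For `δ > 0` the function
`ℓ (d̂ - δ)` is lower semicontinuous, because `d̂` inherits the Lipschitz bound of the `d̂ₙ`.
On a compact `K` carrying all but `ε` of every `γₙ`, uniform convergence gives `d̂ - δ ≤ d̂ₙ`
for large `n`, so `∫ ℓ (d̂ - δ) dγₙ ≤ ∫ ℓ (d̂ₙ) dγₙ + C ε` by monotonicity of `ℓ`. Let `δ → 0`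
(Fatou and lower semicontinuity of `ℓ`) and `ε → 0`; the general case follows by monotone
convergence applied to the truncations `min ℓ m`.
-/

theorem ENNReal.le_liminf_of_tendsto_add_of_limsup_le {u v : ℕ → ℝ≥0∞} {a b : ℝ≥0∞}
    (h_add : Tendsto (fun n => u n + v n) atTop (𝓝 (a + b)))
    (hv : limsup v atTop ≤ b) (hb : b ≠ ∞) : a ≤ liminf u atTop := by
  refine le_of_forall_lt_imp_le_of_dense fun c hca =>
    le_liminf_of_le (f := atTop) (u := u) (by isBoundedDefault) ?_
  obtain ⟨e, hce, hea⟩ := exists_between (ENNReal.add_lt_add_right hb hca)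
  have hcv : ∀ᶠ n in atTop, c + v n < e := by
    refine eventually_lt_of_limsup_lt ?_
    rw [limsup_const_add _ _ _ (by isBoundedDefault) (by isBoundedDefault)]
    exact (add_le_add_right hv c).trans_lt hce
  filter_upwards [hcv, h_add.eventually (lt_mem_nhds hea)] with n hcv hea
  exact (lt_of_add_lt_add_right (hcv.trans hea)).le

theorem ENNReal.le_of_forall_pos_le_add_mul_ofReal {a b C : ℝ≥0∞} (hC : C ≠ ∞)
    (h : ∀ ε : ℝ, 0 < ε → a ≤ b + C * ENNReal.ofReal ε) : a ≤ b := by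
  have h_lim : Tendsto (fun ε => b + C * ENNReal.ofReal ε) (𝓝[>] 0)
      (𝓝 (b + C * ENNReal.ofReal 0)) :=
    tendsto_const_nhds.add (ENNReal.Tendsto.const_mul
      ((ENNReal.continuous_ofReal.tendsto 0).mono_left nhdsWithin_le_nhds) (Or.inr hC))
  simp only [ofReal_zero, mul_zero, add_zero] at h_lim
  exact ge_of_tendsto h_lim (eventually_nhdsWithin_of_forall h)

section Portmanteau

variable {Ω : Type*} [MeasurableSpace Ω] [TopologicalSpace Ω] [OpensMeasurableSpace Ω]

theorem MeasureTheory.FiniteMeasure.le_liminf_measure_open_of_tendsto [HasOuterApproxClosed Ω]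
    {μ : FiniteMeasure Ω} {μs : ℕ → FiniteMeasure Ω} (μs_lim : Tendsto μs atTop (𝓝 μ))
    {G : Set Ω} (G_open : IsOpen G) :
    (μ : Measure Ω) G ≤ atTop.liminf fun n => (μs n : Measure Ω) G := by
  refine ENNReal.le_liminf_of_tendsto_add_of_limsup_le (v := fun n => (μs n : Measure Ω) Gᶜ)
    ?_ (limsup_measure_closed_le_of_tendsto μs_lim G_open.isClosed_compl) (measure_ne_top _ _)
  simp_rw [measure_add_measure_compl G_open.measurableSet, ← ennreal_mass]
  exact ENNReal.tendsto_coe.mpr μs_lim.mass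

theorem lintegral_le_liminf_lintegral_of_lowerSemicontinuous {μ : Measure Ω}
    {μs : ℕ → Measure Ω} {g : Ω → ℝ≥0∞} (hg : LowerSemicontinuous g) (hg_top : ∀ x, g x ≠ ∞)
    (h_opens : ∀ G, IsOpen G → μ G ≤ atTop.liminf fun n => μs n G) :
    ∫⁻ x, g x ∂μ ≤ atTop.liminf fun n => ∫⁻ x, g x ∂μs n := by
  have layercake : ∀ ν : Measure Ω, ∫⁻ x, g x ∂ν = ∫⁻ t in Set.Ioi 0, ν {x | t < (g x).toReal} := by
    intro ν
    rw [← lintegral_eq_lintegral_meas_lt ν (Eventually.of_forall fun x => toReal_nonneg)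
      hg.measurable.ennreal_toReal.aemeasurable]
    exact lintegral_congr fun x => (ofReal_toReal (hg_top x)).symm
  have superlevel_open : ∀ t : ℝ, 0 < t → IsOpen {x | t < (g x).toReal} := fun t ht => by
    convert hg.isOpen_preimage (ENNReal.ofReal t) using 1
    ext x
    exact (ofReal_lt_iff_lt_toReal ht.le (hg_top x)).symm
  simp_rw [layercake]
  calc ∫⁻ t in Set.Ioi 0, μ {x | t < (g x).toReal}
      ≤ ∫⁻ t in Set.Ioi 0, atTop.liminf fun n => μs n {x | t < (g x).toReal} :=
        setLIntegral_mono' measurableSet_Ioi fun t ht => h_opens _ (superlevel_open t ht)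
    _ ≤ atTop.liminf fun n => ∫⁻ t in Set.Ioi 0, μs n {x | t < (g x).toReal} :=
        lintegral_liminf_le fun n => Antitone.measurable fun s t hst =>
          measure_mono fun x hx => lt_of_le_of_lt hst hx

end Portmanteau

theorem lintegral_comp_le_of_forall_lintegral_comp_sub_le {Ω : Type*} [MeasurableSpace Ω]
    {μ : Measure Ω} {ℓ : ℝ → ℝ≥0∞} (hℓ : LowerSemicontinuous ℓ) {f : Ω → ℝ} (hf : Measurable f)
    {B : ℝ≥0∞} (h : ∀ δ : ℝ, 0 < δ → ∫⁻ x, ℓ (f x - δ) ∂μ ≤ B) : ∫⁻ x, ℓ (f x) ∂μ ≤ B := by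
  set δ : ℕ → ℝ := fun k => 1 / (k + 1)
  have hδ : Tendsto δ atTop (𝓝 0) := tendsto_one_div_add_atTop_nhds_zero_nat
  have h_pointwise : ∀ x, ℓ (f x) ≤ atTop.liminf fun k => ℓ (f x - δ k) := by
    intro x
    have h_approx : Tendsto (fun k => f x - δ k) atTop (𝓝 (f x)) := by
      simpa using tendsto_const_nhds.sub hδ
    exact le_of_forall_lt_imp_le_of_dense fun c hc => le_liminf_of_le (by isBoundedDefault) <|
      (h_approx.eventually (hℓ (f x) c hc)).mono fun k hk => le_of_lt hk
  calc ∫⁻ x, ℓ (f x) ∂μ ≤ ∫⁻ x, atTop.liminf fun k => ℓ (f x - δ k) ∂μ := lintegral_mono h_pointwise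
    _ ≤ atTop.liminf fun k => ∫⁻ x, ℓ (f x - δ k) ∂μ :=
        lintegral_liminf_le fun k => hℓ.measurable.comp (hf.sub_const _)
    _ ≤ B := liminf_le_of_frequently_le' (Frequently.of_forall fun k => h (δ k) (by positivity))

theorem lipschitzWith_two_of_abs_sub_le_dist_add_dist {X Y : Type*} [PseudoMetricSpace X]
    [PseudoMetricSpace Y] {g : X × Y → ℝ}
    (hg : ∀ q q' : X × Y, |g q - g q'| ≤ dist q.1 q'.1 + dist q.2 q'.2) : LipschitzWith 2 g :=
  LipschitzWith.of_dist_le_mul fun q q' => by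
    rw [Real.dist_eq]
    have h₁ : dist q.1 q'.1 ≤ dist q q' := le_max_left _ _
    have h₂ : dist q.2 q'.2 ≤ dist q q' := le_max_right _ _
    push_cast
    linarith [hg q q']

section Transport

variable {Ω : Type*} [MeasurableSpace Ω] [TopologicalSpace Ω] [OpensMeasurableSpace Ω]
  {μ : Measure Ω} {μs : ℕ → Measure Ω} {f : Ω → ℝ} {fs : ℕ → Ω → ℝ} {ℓ : ℝ → ℝ≥0∞}

theorem lintegral_comp_sub_le_liminf_add_mul (hℓ : LowerSemicontinuous ℓ) (hℓ_mono : Monotone ℓ)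
    {C : ℝ≥0∞} (hC : C ≠ ∞) (hℓC : ∀ x, ℓ x ≤ C) (hf : Continuous f)
    (h_opens : ∀ G, IsOpen G → μ G ≤ atTop.liminf fun n => μs n G)
    {K : Set Ω} (hK : MeasurableSet K) (h_unif : TendstoUniformlyOn fs f atTop K)
    {ε : ℝ≥0∞} (h_tight : ∀ n, μs n Kᶜ ≤ ε) {δ : ℝ} (hδ : 0 < δ) :
    ∫⁻ x, ℓ (f x - δ) ∂μ ≤ (atTop.liminf fun n => ∫⁻ x, ℓ (fs n x) ∂μs n) + C * ε := by
  have h_eventually : ∀ᶠ n in atTop,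
      ∫⁻ x, ℓ (f x - δ) ∂μs n ≤ ∫⁻ x, ℓ (fs n x) ∂μs n + C * ε := by
    filter_upwards [Metric.tendstoUniformlyOn_iff.mp h_unif δ hδ] with n hn
    have h_pointwise : ∀ x, ℓ (f x - δ) ≤ ℓ (fs n x) + Kᶜ.indicator (fun _ => C) x := by
      intro x
      by_cases hx : x ∈ K
      · refine (hℓ_mono ?_).trans le_self_add
        have h_close := hn x hx
        rw [Real.dist_eq, abs_lt] at h_close
        linarith [h_close.2]
      · simpa [hx] using (hℓC _).trans le_add_self
    calc ∫⁻ x, ℓ (f x - δ) ∂μs n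
        ≤ ∫⁻ x, ℓ (fs n x) + Kᶜ.indicator (fun _ => C) x ∂μs n := lintegral_mono h_pointwise
      _ = ∫⁻ x, ℓ (fs n x) ∂μs n + C * μs n Kᶜ := by
        rw [lintegral_add_right _ (measurable_const.indicator hK.compl),
          lintegral_indicator_const hK.compl]
      _ ≤ ∫⁻ x, ℓ (fs n x) ∂μs n + C * ε := by gcongr; exact h_tight n
  calc ∫⁻ x, ℓ (f x - δ) ∂μ ≤ atTop.liminf fun n => ∫⁻ x, ℓ (f x - δ) ∂μs n :=
        lintegral_le_liminf_lintegral_of_lowerSemicontinuous (hℓ.comp (hf.sub continuous_const))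
          (fun x => ne_top_of_le_ne_top hC (hℓC _)) h_opens
    _ ≤ atTop.liminf fun n => ∫⁻ x, ℓ (fs n x) ∂μs n + C * ε := liminf_le_liminf h_eventually
    _ = (atTop.liminf fun n => ∫⁻ x, ℓ (fs n x) ∂μs n) + C * ε :=
        liminf_add_const _ _ _ (by isBoundedDefault) (by isBoundedDefault)

variable [T2Space Ω]

theorem lintegral_comp_le_liminf_of_le (hℓ : LowerSemicontinuous ℓ) (hℓ_mono : Monotone ℓ)
    {C : ℝ≥0∞} (hC : C ≠ ∞) (hℓC : ∀ x, ℓ x ≤ C) (hf : Continuous f)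
    (h_opens : ∀ G, IsOpen G → μ G ≤ atTop.liminf fun n => μs n G)
    (h_unif : ∀ K, IsCompact K → TendstoUniformlyOn fs f atTop K)
    (h_tight : ∀ ε : ℝ, 0 < ε → ∃ K, IsCompact K ∧ ∀ n, μs n Kᶜ ≤ ENNReal.ofReal ε) :
    ∫⁻ x, ℓ (f x) ∂μ ≤ atTop.liminf fun n => ∫⁻ x, ℓ (fs n x) ∂μs n := by
  refine ENNReal.le_of_forall_pos_le_add_mul_ofReal hC fun ε hε => ?_
  obtain ⟨K, hK, hK_tight⟩ := h_tight ε hε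
  exact lintegral_comp_le_of_forall_lintegral_comp_sub_le hℓ hf.measurable fun δ hδ =>
    lintegral_comp_sub_le_liminf_add_mul hℓ hℓ_mono hC hℓC hf h_opens hK.measurableSet
      (h_unif K hK) hK_tight hδ

theorem lintegral_comp_le_liminf (hℓ : LowerSemicontinuous ℓ) (hℓ_mono : Monotone ℓ)
    (hf : Continuous f) (h_opens : ∀ G, IsOpen G → μ G ≤ atTop.liminf fun n => μs n G)
    (h_unif : ∀ K, IsCompact K → TendstoUniformlyOn fs f atTop K)
    (h_tight : ∀ ε : ℝ, 0 < ε → ∃ K, IsCompact K ∧ ∀ n, μs n Kᶜ ≤ ENNReal.ofReal ε) :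
    ∫⁻ x, ℓ (f x) ∂μ ≤ atTop.liminf fun n => ∫⁻ x, ℓ (fs n x) ∂μs n := by
  have h_trunc : ∀ m : ℕ, ∫⁻ x, ℓ (f x) ⊓ m ∂μ ≤ atTop.liminf fun n => ∫⁻ x, ℓ (fs n x) ∂μs n :=
    fun m => (lintegral_comp_le_liminf_of_le (hℓ.inf lowerSemicontinuous_const)
      (hℓ_mono.inf monotone_const) (natCast_ne_top m) (fun _ => inf_le_right) hf h_opens h_unif
      h_tight).trans (liminf_le_liminf (Eventually.of_forall fun n =>
        lintegral_mono fun x => inf_le_left))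
  calc ∫⁻ x, ℓ (f x) ∂μ = ∫⁻ x, ⨆ m : ℕ, ℓ (f x) ⊓ m ∂μ := by
        simp only [← inf_iSup_eq, iSup_natCast, inf_top_eq]
    _ = ⨆ m : ℕ, ∫⁻ x, ℓ (f x) ⊓ m ∂μ :=
        lintegral_iSup (fun m => (hℓ.measurable.comp hf.measurable).min measurable_const)
          fun m m' hm x => inf_le_inf_left _ (Nat.cast_le.mpr hm)
    _ ≤ _ := iSup_le h_trunc

end Transport

theorem liminf_transport_lsc_general
    {X₁ X₂ : Type*} [MetricSpace X₁] [MetricSpace X₂]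
    [TopologicalSpace.SeparableSpace X₂]
    [MeasurableSpace X₁] [BorelSpace X₁] [MeasurableSpace X₂] [BorelSpace X₂]
    (γ : ℕ → Measure (X₁ × X₂)) (γlim : Measure (X₁ × X₂))
    [∀ n, IsFiniteMeasure (γ n)] [IsFiniteMeasure γlim]
    (hweak : ∀ f : BoundedContinuousFunction (X₁ × X₂) ℝ,
      Tendsto (fun n => ∫ q, f q ∂(γ n)) atTop (nhds (∫ q, f q ∂γlim)))
    (dhn : ℕ → X₁ × X₂ → ℝ) (dh : X₁ × X₂ → ℝ)
    (hlip : ∀ n (q q' : X₁ × X₂), |dhn n q - dhn n q'| ≤ dist q.1 q'.1 + dist q.2 q'.2)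
    (hptwise : ∀ q, Tendsto (fun n => dhn n q) atTop (nhds (dh q)))
    (hunif : ∀ K : Set (X₁ × X₂), IsCompact K → TendstoUniformlyOn dhn dh atTop K)
    (htight : ∀ ε : ℝ, 0 < ε → ∃ K : Set (X₁ × X₂), IsCompact K ∧
      ∀ n, γ n Kᶜ ≤ ENNReal.ofReal ε)
    (ℓ : ℝ → ℝ≥0∞) (hℓlsc : LowerSemicontinuous ℓ) (hℓmono : Monotone ℓ) :
    ∫⁻ q, ℓ (dh q) ∂γlim ≤
      Filter.liminf (fun n => ∫⁻ q, ℓ (dhn n q) ∂(γ n)) atTop := by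
  have hdh_lip : ∀ q q' : X₁ × X₂, |dh q - dh q'| ≤ dist q.1 q'.1 + dist q.2 q'.2 := fun q q' =>
    le_of_tendsto' ((hptwise q).sub (hptwise q')).abs fun n => hlip n q q'
  have hγ : Tendsto (β := FiniteMeasure (X₁ × X₂)) (fun n => ⟨γ n, inferInstance⟩) atTop
      (𝓝 ⟨γlim, inferInstance⟩) :=
    FiniteMeasure.tendsto_iff_forall_integral_tendsto.mpr hweak
  exact lintegral_comp_le_liminf hℓlsc hℓmono
    (lipschitzWith_two_of_abs_sub_le_dist_add_dist hdh_lip).continuous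
    (fun G hG => FiniteMeasure.le_liminf_measure_open_of_tendsto hγ hG) hunif htight

/-- Lower semicontinuity of the transport part of the Entropy-Transport
functional along a weakly converging, equally tight, mass-bounded sequence of plans `γₙ ⇀ γ`
and a sequence of `1`-Lipschitz (w.r.t. `d₁+d₂`) pseudo-distances `d̂ₙ → d̂` converging
pointwise and uniformly on compact sets, for `ℓ` lower semicontinuous and increasing:
`liminf ∫ ℓ(d̂ₙ) dγₙ ≥ ∫ ℓ(d̂) dγ`. -/
theorem liminf_transport_lsc
    {X₁ X₂ : Type*} [MetricSpace X₁] [MetricSpace X₂]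
    [CompleteSpace X₁] [CompleteSpace X₂]
    [TopologicalSpace.SeparableSpace X₁] [TopologicalSpace.SeparableSpace X₂]
    [MeasurableSpace X₁] [BorelSpace X₁] [MeasurableSpace X₂] [BorelSpace X₂]
    (γ : ℕ → Measure (X₁ × X₂)) (γlim : Measure (X₁ × X₂))
    [∀ n, IsFiniteMeasure (γ n)] [IsFiniteMeasure γlim]
    (hweak : ∀ f : BoundedContinuousFunction (X₁ × X₂) ℝ,
      Tendsto (fun n => ∫ q, f q ∂(γ n)) atTop (nhds (∫ q, f q ∂γlim)))
    (dhn : ℕ → X₁ × X₂ → ℝ) (dh : X₁ × X₂ → ℝ)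
    (hnonneg : ∀ n q, 0 ≤ dhn n q)
    (hlip : ∀ n (q q' : X₁ × X₂), |dhn n q - dhn n q'| ≤ dist q.1 q'.1 + dist q.2 q'.2)
    (hptwise : ∀ q, Tendsto (fun n => dhn n q) atTop (nhds (dh q)))
    (hunif : ∀ K : Set (X₁ × X₂), IsCompact K → TendstoUniformlyOn dhn dh atTop K)
    (htight : ∀ ε : ℝ, 0 < ε → ∃ K : Set (X₁ × X₂), IsCompact K ∧
      ∀ n, γ n Kᶜ ≤ ENNReal.ofReal ε)
    (hbound : ∃ Mb : ℝ≥0∞, Mb ≠ ⊤ ∧ ∀ n, γ n Set.univ ≤ Mb)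
    (ℓ : ℝ → ℝ≥0∞) (hℓlsc : LowerSemicontinuous ℓ) (hℓmono : Monotone ℓ) :
    ∫⁻ q, ℓ (dh q) ∂γlim ≤
      Filter.liminf (fun n => ∫⁻ q, ℓ (dhn n q) ∂(γ n)) atTop :=
  liminf_transport_lsc_general γ γlim hweak dhn dh hlip hptwise hunif htight ℓ hℓlsc hℓmono
end

section
/- For the power-like entropy U₁ at p = 1, H₀(r,t) = (√r − √t)²; that is, inf_{θ > 0} [ Û₁(θ,r) + Û₁(θ,t) ] = (√r − √t)² for all r,t > 0, where Û₁(θ,s) := s·U₁(θ/s) is the perspective function of U₁(u) = u log u − u + 1. -/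
open Real

/-- The Kullback–Leibler entropy function `U₁(u) = u log u − u + 1`. -/
noncomputable def U1fun (u : ℝ) : ℝ := u * Real.log u - u + 1

lemma U1fun_nonneg (u : ℝ) (hu : 0 < u) : 0 ≤ U1fun u := by
  have h := Real.log_le_sub_one_of_pos (inv_pos.mpr hu)
  rw [Real.log_inv] at h
  unfold U1fun
  nlinarith [mul_le_mul_of_nonneg_left h hu.le, mul_inv_cancel₀ hu.ne']

lemma persp_eq (a θ : ℝ) (ha : 0 < a) (hθ : 0 < θ) :
    a * U1fun (θ / a) = θ * (Real.log θ - Real.log a) - θ + a := by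
  unfold U1fun
  rw [Real.log_div hθ.ne' ha.ne']
  field_simp
  try ring

lemma key_lb (r t θ : ℝ) (hr : 0 < r) (ht : 0 < t) (hθ : 0 < θ) :
    (Real.sqrt r - Real.sqrt t) ^ 2 ≤ r * U1fun (θ / r) + t * U1fun (θ / t) := by
  set s := Real.sqrt (r * t) with hs_def
  have hs : 0 < s := Real.sqrt_pos.mpr (mul_pos hr ht)
  have hlogs : Real.log s = (Real.log r + Real.log t) / 2 := by
    rw [hs_def, Real.log_sqrt (mul_pos hr ht).le, Real.log_mul hr.ne' ht.ne']
  have h1 : 0 ≤ θ * (Real.log θ - Real.log s) - θ + s := by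
    rw [← persp_eq s θ hs hθ]
    exact mul_nonneg hs.le (U1fun_nonneg _ (div_pos hθ hs))
  have hsq : (Real.sqrt r - Real.sqrt t) ^ 2 = r + t - 2 * s := by
    have h2 : Real.sqrt r * Real.sqrt t = s := (Real.sqrt_mul hr.le t).symm
    have h3 : Real.sqrt r ^ 2 = r := Real.sq_sqrt hr.le
    have h4 : Real.sqrt t ^ 2 = t := Real.sq_sqrt ht.le
    nlinarith
  rw [persp_eq r θ hr hθ, persp_eq t θ ht hθ, hsq]
  rw [hlogs] at h1
  linarith

/-- For the entropy `U₁(u) = u log u − u + 1` and all `r, t > 0`,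
`inf_{θ>0} [Û₁(θ,r) + Û₁(θ,t)] = (√r − √t)²`, where `Û₁(θ,s) = s·U₁(θ/s)` is the
perspective function of `U₁` (the marginal perspective function at zero cost is the
squared Hellinger integrand). -/
theorem marginalPerspective_U1 (r t : ℝ) (hr : 0 < r) (ht : 0 < t) :
    (⨅ θ : {θ : ℝ // 0 < θ},
        (r * U1fun ((θ : ℝ) / r) + t * U1fun ((θ : ℝ) / t))) =
      (Real.sqrt r - Real.sqrt t) ^ 2 := by
  have hs : 0 < Real.sqrt (r * t) := Real.sqrt_pos.mpr (mul_pos hr ht)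
  apply le_antisymm
  · have hle := ciInf_le (f := fun θ : {θ : ℝ // 0 < θ} =>
        r * U1fun ((θ : ℝ) / r) + t * U1fun ((θ : ℝ) / t))
      ⟨(Real.sqrt r - Real.sqrt t) ^ 2, by
        rintro x ⟨θ, rfl⟩
        exact key_lb r t θ hr ht θ.2⟩ ⟨Real.sqrt (r * t), hs⟩
    refine hle.trans_eq ?_
    have hlogs : Real.log (Real.sqrt (r * t)) = (Real.log r + Real.log t) / 2 := by
      rw [Real.log_sqrt (mul_pos hr ht).le, Real.log_mul hr.ne' ht.ne']
    have hsq : (Real.sqrt r - Real.sqrt t) ^ 2 = r + t - 2 * Real.sqrt (r * t) := by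
      have h2 : Real.sqrt r * Real.sqrt t = Real.sqrt (r * t) := (Real.sqrt_mul hr.le t).symm
      have h3 : Real.sqrt r ^ 2 = r := Real.sq_sqrt hr.le
      have h4 : Real.sqrt t ^ 2 = t := Real.sq_sqrt ht.le
      nlinarith
    simp only
    rw [persp_eq r _ hr hs, persp_eq t _ ht hs, hsq, hlogs]
    ring
  · exact le_ciInf fun θ => key_lb r t θ hr ht θ.2
end

section
/- Fix p > 1 and let U_p(s) := (s^p − p(s−1) − 1)/(p(p−1)). Then for all r, t > 0, inf_{θ>0} [ Û_p(θ, r) + Û_p(θ, t) ] = (1/p) [ r + t − 2^{p/(p−1)} ( r^{1−p} + t^{1−p} )^{1/(1−p)} ], where Û_p(θ,s) := s·U_p(θ/s) is the perspective function of U_p. -/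
open Real

/-- The power-like entropy `U_p(s) = (s^p − p(s−1) − 1)/(p(p−1))` (with real exponent). -/
noncomputable def Upfun (p s : ℝ) : ℝ := (s ^ p - p * (s - 1) - 1) / (p * (p - 1))

/-!
With `A = r^(1-p) + t^(1-p)` the objective equals `(θ^p A - 2pθ + (p-1)(r+t)) / (p(p-1))`.
The first-order condition `c^(p-1) A = 2` singles out `c = (2/A)^(1/(p-1))`, and the tangent line
of the convex function `θ ↦ θ^p` at `c` (Bernoulli's inequality) shows that `c` is the global
minimiser. Since `c^p A = 2c`, the minimum is `(r + t - 2c)/p`, and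
`2c = 2^(p/(p-1)) A^(1/(1-p))`.
-/

theorem mul_Upfun_div (p : ℝ) {s θ : ℝ} (hs : 0 < s) (hθ : 0 ≤ θ) :
    s * Upfun p (θ / s) = (θ ^ p * s ^ (1 - p) - p * θ + (p - 1) * s) / (p * (p - 1)) := by
  rw [Upfun, div_rpow hθ hs.le, rpow_sub hs, rpow_one]
  field_simp
  ring

theorem rpow_tangent_le_rpow {p c θ : ℝ} (hp : 1 ≤ p) (hc : 0 < c) (hθ : 0 ≤ θ) :
    c ^ p + p * c ^ (p - 1) * (θ - c) ≤ θ ^ p := by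
  have bernoulli := one_add_mul_self_le_rpow_one_add
    (by linarith [div_nonneg hθ hc.le] : -1 ≤ θ / c - 1) hp
  rw [add_sub_cancel, div_rpow hθ hc.le, le_div_iff₀ (by positivity)] at bernoulli
  calc c ^ p + p * c ^ (p - 1) * (θ - c) = (1 + p * (θ / c - 1)) * c ^ p := by
        rw [rpow_sub_one hc.ne']
        field_simp
    _ ≤ θ ^ p := bernoulli

theorem isMinOn_rpow_mul_sub_mul {p A c : ℝ} (hp : 1 ≤ p) (hA : 0 ≤ A) (hc : 0 < c) :
    IsMinOn (fun θ => θ ^ p * A - p * (c ^ (p - 1) * A) * θ) (Set.Ici 0) c := by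
  refine isMinOn_iff.mpr fun θ hθ => ?_
  have tangent := mul_le_mul_of_nonneg_right (rpow_tangent_le_rpow hp hc hθ) hA
  linarith

theorem rpow_div_sub_one_mul_rpow_one_div_one_sub {p : ℝ} (hp : p ≠ 1) {a A : ℝ} (ha : 0 < a)
    (hA : 0 < A) :
    a ^ (p / (p - 1)) * A ^ (1 / (1 - p)) = a * (a / A) ^ (p - 1)⁻¹ := by
  have hp' : p - 1 ≠ 0 := sub_ne_zero.mpr hp
  rw [show p / (p - 1) = 1 + (p - 1)⁻¹ by field_simp; ring,
    show 1 / (1 - p) = -(p - 1)⁻¹ by rw [← neg_sub, one_div, inv_neg],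
    rpow_add ha, rpow_one, rpow_neg hA.le, div_rpow ha.le hA.le]
  ring

/-- For `p > 1` and all `r, t > 0`,
`inf_{θ>0} [Û_p(θ,r) + Û_p(θ,t)]
  = (1/p)·[ r + t − 2^{p/(p−1)} (r^{1−p} + t^{1−p})^{1/(1−p)} ]`,
where `Û_p(θ,s) = s·U_p(θ/s)` is the perspective function of `U_p`. -/
theorem marginalPerspective_Up (p : ℝ) (hp : 1 < p) (r t : ℝ) (hr : 0 < r) (ht : 0 < t) :
    (⨅ θ : {θ : ℝ // 0 < θ},
        (r * Upfun p ((θ : ℝ) / r) + t * Upfun p ((θ : ℝ) / t))) =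
      (1 / p) * (r + t - 2 ^ (p / (p - 1)) *
        (r ^ (1 - p) + t ^ (1 - p)) ^ (1 / (1 - p))) := by
  set A := r ^ (1 - p) + t ^ (1 - p)
  have hA : 0 < A := by positivity
  set c := (2 / A) ^ (p - 1)⁻¹
  have hc : 0 < c := by positivity
  have hp0 : p ≠ 0 := by positivity
  have hp1 : p - 1 ≠ 0 := sub_ne_zero.mpr hp.ne'
  have hcA : c ^ (p - 1) * A = 2 := by
    rw [rpow_inv_rpow (by positivity) hp1]
    field_simp
  have hcpA : c ^ p * A = 2 * c := by
    rw [← hcA, rpow_sub_one hc.ne']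
    field_simp
  have hobjective (θ : ℝ) (hθ : 0 ≤ θ) :
      r * Upfun p (θ / r) + t * Upfun p (θ / t) =
        (θ ^ p * A - p * (c ^ (p - 1) * A) * θ + (p - 1) * (r + t)) / (p * (p - 1)) := by
    rw [mul_Upfun_div p hr hθ, mul_Upfun_div p ht hθ, hcA]
    ring
  have hmin : IsLeast (Set.range fun θ : {θ : ℝ // 0 < θ} =>
      r * Upfun p ((θ : ℝ) / r) + t * Upfun p ((θ : ℝ) / t)) ((r + t - 2 * c) / p) := by
    have hvalue : (r + t - 2 * c) / p = r * Upfun p (c / r) + t * Upfun p (c / t) := by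
      rw [hobjective c hc.le, hcA, hcpA]
      field_simp
      ring
    refine ⟨⟨⟨c, hc⟩, hvalue.symm⟩, ?_⟩
    rintro _ ⟨⟨θ, hθ⟩, rfl⟩
    dsimp only
    rw [hvalue, hobjective c hc.le, hobjective θ hθ.le]
    gcongr (?_ + _) / _
    exact isMinOn_iff.mp (isMinOn_rpow_mul_sub_mul hp.le hA.le hc) θ hθ.le
  rw [iInf, hmin.csInf_eq, rpow_div_sub_one_mul_rpow_one_div_one_sub hp.ne' two_pos hA]
  ring
end

section
/- Let D_ET be a regular Entropy-Transport distance with parameters (1/p, F, ℓ) where ℓ(d) = d^p, p ≥ 1 and F ∈ Γ₀(ℝ₊). Then for all metric measure spaces with probability measures of finite p-moment, the Sturm-Entropy-Transport distance is dominated by Sturm's distance: 𝐃_ET((X₁,d₁,μ₁),(X₂,d₂,μ₂)) ≤ 𝐃_p((X₁,d₁,μ₁),(X₂,d₂,μ₂)). -/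
open MeasureTheory ENNReal NNReal Filter Topology

/-- The `p`-th power of Sturm's distance `𝐃_p`: infimum over pseudo-metric couplings and
exact couplings of the measures of `∫ d̂^p dγ`. -/
noncomputable def SturmWpCost {X₁ X₂ : Type*} [MetricSpace X₁] [MetricSpace X₂]
    [MeasurableSpace X₁] [MeasurableSpace X₂]
    (p : ℝ) (μ₁ : Measure X₁) (μ₂ : Measure X₂) : ℝ≥0∞ :=
  ⨅ (dh : X₁ ⊕ X₂ → X₁ ⊕ X₂ → ℝ) (_ : IsMetricCoupling dh)
    (γ : Measure (X₁ × X₂)) (_ : γ.map Prod.fst = μ₁) (_ : γ.map Prod.snd = μ₂),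
      ∫⁻ q, ENNReal.ofReal (dh (Sum.inl q.1) (Sum.inr q.2)) ^ p ∂γ

lemma Fdiv_self_aux {X : Type*} [MeasurableSpace X] (F : ℝ≥0∞ → ℝ≥0∞) (hF1 : F 1 = 0)
    (μ : Measure X) [SigmaFinite μ] : Fdiv F ⊤ μ μ = 0 := by
  unfold Fdiv
  rw [Measure.singularPart_self, Measure.coe_zero, Pi.zero_apply, mul_zero, add_zero]
  have : ∫⁻ x, F (μ.rnDeriv μ x) ∂μ = ∫⁻ _, F 1 ∂μ := by
    apply lintegral_congr_ae
    filter_upwards [Measure.rnDeriv_self μ] with x hx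
    rw [hx]
  rw [this, hF1, lintegral_zero]

/-- For a regular Entropy-Transport distance with parameters
`(1/p, F, ℓ)`, `ℓ(d) = d^p`, `p ≥ 1`, and probability measures of finite `p`-moment, the
Sturm-Entropy-Transport distance is dominated by Sturm's distance:
`𝐃_ET((X₁,d₁,μ₁),(X₂,d₂,μ₂)) ≤ 𝐃_p((X₁,d₁,μ₁),(X₂,d₂,μ₂))`. -/
theorem sturmET_le_sturmDp
    {X₁ X₂ : Type*} [MetricSpace X₁] [MetricSpace X₂]
    [CompleteSpace X₁] [CompleteSpace X₂]
    [TopologicalSpace.SeparableSpace X₁] [TopologicalSpace.SeparableSpace X₂]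
    [MeasurableSpace X₁] [BorelSpace X₁] [MeasurableSpace X₂] [BorelSpace X₂]
    (p : ℝ) (hp : 1 ≤ p)
    (F : ℝ≥0∞ → ℝ≥0∞)
    (hFconv : ∀ x y t : ℝ≥0∞, t ≤ 1 → F (t * x + (1 - t) * y) ≤ t * F x + (1 - t) * F y)
    (hFlsc : LowerSemicontinuous F)
    (hF1 : F 1 = 0)
    (μ₁ : Measure X₁) (μ₂ : Measure X₂)
    [IsProbabilityMeasure μ₁] [IsProbabilityMeasure μ₂]
    (x₁ : X₁) (x₂ : X₂)
    (hm₁ : (∫⁻ x, edist x₁ x ^ p ∂μ₁) ≠ ⊤) (hm₂ : (∫⁻ x, edist x₂ x ^ p ∂μ₂) ≠ ⊤) :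
    SturmETCost F ⊤ (fun d => ENNReal.ofReal d ^ p) μ₁ μ₂ ^ (1 / p) ≤
      SturmWpCost p μ₁ μ₂ ^ (1 / p) := by
  have key : SturmETCost F ⊤ (fun d => ENNReal.ofReal d ^ p) μ₁ μ₂ ≤ SturmWpCost p μ₁ μ₂ := by
    unfold SturmWpCost
    simp only [le_iInf_iff]
    intro dh hdh γ h1 h2
    have hfin : IsFiniteMeasure γ := by
      constructor
      have : γ Set.univ = (γ.map Prod.fst) Set.univ := by
        rw [Measure.map_apply measurable_fst MeasurableSet.univ, Set.preimage_univ]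
      rw [this, h1]
      exact measure_lt_top μ₁ Set.univ
    refine le_trans (iInf_le_of_le dh (iInf_le_of_le hdh (iInf_le_of_le γ
      (iInf_le_of_le hfin le_rfl)))) ?_
    rw [h1, h2, Fdiv_self_aux F hF1 μ₁, Fdiv_self_aux F hF1 μ₂, zero_add, zero_add]
  exact ENNReal.rpow_le_rpow key (by positivity)
end
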